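/- arXiv:1503.00043 — 11 statements merged into one kernel-verified Lean document; each statement's English description precedes it below -/
import Mathlib

section
/- For THT formulas of implication height at most 1: if (H,T) ⊨ φ (at position 0) then H is an LTL model of φ, i.e., H ⊨_LTL φ. -/
inductive THT (P : Type) : Type
  | atom : P → THT P
  | falsum : THT P
  | or : THT P → THT P → THT P
  | and : THT P → THT P → THT P
  | imp : THT P → THT P → THT P
  | next : THT P → THT P
  | until_ : THT P → THT P → THT P
  | release : THT P → THT P → THT P
  deriving DecidableEq

namespace THT

variable {P : Type}

/-- THT (here-and-there temporal) satisfaction: `sat φ H T i` means `(H,T), i ⊨ φ`. -/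
def sat : THT P → (ℕ → Set P) → (ℕ → Set P) → ℕ → Prop
  | atom p, H, _, i => p ∈ H i
  | falsum, _, _, _ => False
  | or a b, H, T, i => sat a H T i ∨ sat b H T i
  | and a b, H, T, i => sat a H T i ∧ sat b H T i
  | imp a b, H, T, i => (sat a H T i → sat b H T i) ∧ (sat a T T i → sat b T T i)
  | next a, H, T, i => sat a H T (i + 1)
  | until_ a b, H, T, i => ∃ j, i ≤ j ∧ sat b H T j ∧ ∀ k, i ≤ k → k < j → sat a H T k
  | release a b, H, T, i => ∀ j, i ≤ j → sat b H T j ∨ ∃ k, i ≤ k ∧ k < j ∧ sat a H T k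

/-- Standard (classical) LTL satisfaction over infinite words. -/
def ltlSat : THT P → (ℕ → Set P) → ℕ → Prop
  | atom p, T, i => p ∈ T i
  | falsum, _, _ => False
  | or a b, T, i => ltlSat a T i ∨ ltlSat b T i
  | and a b, T, i => ltlSat a T i ∧ ltlSat b T i
  | imp a b, T, i => ltlSat a T i → ltlSat b T i
  | next a, T, i => ltlSat a T (i + 1)
  | until_ a b, T, i => ∃ j, i ≤ j ∧ ltlSat b T j ∧ ∀ k, i ≤ k → k < j → ltlSat a T k
  | release a b, T, i => ∀ j, i ≤ j → ltlSat b T j ∨ ∃ k, i ≤ k ∧ k < j ∧ ltlSat a T k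

/-- Negation: ¬φ := φ → ⊥. -/
def neg (φ : THT P) : THT P := imp φ falsum

/-- ⊤ := ¬⊥. -/
def top : THT P := neg falsum

/-- Eventually: F φ := ⊤ U φ. -/
def ev (φ : THT P) : THT P := until_ top φ

/-- Always: G φ := ⊥ R φ. -/
def alw (φ : THT P) : THT P := release falsum φ

/-- Implication height: maximal nesting depth of →. -/
def impHeight : THT P → ℕ
  | atom _ => 0
  | falsum => 0
  | or a b => max (impHeight a) (impHeight b)
  | and a b => max (impHeight a) (impHeight b)
  | imp a b => max (impHeight a) (impHeight b) + 1
  | next a => impHeight a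
  | until_ a b => max (impHeight a) (impHeight b)
  | release a b => max (impHeight a) (impHeight b)

/-- Temporal height: maximal nesting depth of temporal modalities X, U, R. -/
def tempHeight : THT P → ℕ
  | atom _ => 0
  | falsum => 0
  | or a b => max (tempHeight a) (tempHeight b)
  | and a b => max (tempHeight a) (tempHeight b)
  | imp a b => max (tempHeight a) (tempHeight b)
  | next a => tempHeight a + 1
  | until_ a b => max (tempHeight a) (tempHeight b) + 1
  | release a b => max (tempHeight a) (tempHeight b) + 1

/-- Nesting depth of the next modality X. -/
def dX : THT P → ℕ
  | atom _ => 0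
  | falsum => 0
  | or a b => max (dX a) (dX b)
  | and a b => max (dX a) (dX b)
  | imp a b => max (dX a) (dX b)
  | next a => dX a + 1
  | until_ a b => max (dX a) (dX b)
  | release a b => max (dX a) (dX b)

/-- The set of subformulas of a formula. -/
def subformulas [DecidableEq P] : THT P → Finset (THT P)
  | atom p => {atom p}
  | falsum => {falsum}
  | or a b => insert (or a b) (subformulas a ∪ subformulas b)
  | and a b => insert (and a b) (subformulas a ∪ subformulas b)
  | imp a b => insert (imp a b) (subformulas a ∪ subformulas b)
  | next a => insert (next a) (subformulas a)
  | until_ a b => insert (until_ a b) (subformulas a ∪ subformulas b)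
  | release a b => insert (release a b) (subformulas a ∪ subformulas b)

/-- Implication-free (hence negation-free) formulas. -/
inductive ImpFree : THT P → Prop
  | atom (p : P) : ImpFree (atom p)
  | falsum : ImpFree falsum
  | or {a b : THT P} : ImpFree a → ImpFree b → ImpFree (or a b)
  | and {a b : THT P} : ImpFree a → ImpFree b → ImpFree (and a b)
  | next {a : THT P} : ImpFree a → ImpFree (next a)
  | until_ {a b : THT P} : ImpFree a → ImpFree b → ImpFree (until_ a b)
  | release {a b : THT P} : ImpFree a → ImpFree b → ImpFree (release a b)

/-- Formulas of the fragment THT(X,F): only temporal modalities X and F. -/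
inductive IsXF : THT P → Prop
  | atom (p : P) : IsXF (atom p)
  | falsum : IsXF falsum
  | or {a b : THT P} : IsXF a → IsXF b → IsXF (or a b)
  | and {a b : THT P} : IsXF a → IsXF b → IsXF (and a b)
  | imp {a b : THT P} : IsXF a → IsXF b → IsXF (imp a b)
  | next {a : THT P} : IsXF a → IsXF (next a)
  | fut {a : THT P} : IsXF a → IsXF (ev a)

/-- Temporal equilibrium model: a total THT model `(T,T)` of `φ` such that no strictly
smaller `H ⊏ T` yields a THT model `(H,T)` of `φ`. -/
def EqModel (φ : THT P) (T : ℕ → Set P) : Prop :=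
  sat φ T T 0 ∧ ∀ H : ℕ → Set P, (∀ i, H i ⊆ T i) → H ≠ T → ¬ sat φ H T 0

end THT


lemma impfree_sat_iff {P : Type} (φ : THT P) (hφ : THT.impHeight φ = 0)
    (H T : ℕ → Set P) : ∀ i, THT.sat φ H T i ↔ THT.ltlSat φ H i := by
  induction φ with
  | atom p => intro i; rfl
  | falsum => intro i; rfl
  | or a b iha ihb =>
      simp only [THT.impHeight, Nat.max_eq_zero_iff] at hφ
      intro i
      simp only [THT.sat, THT.ltlSat, iha hφ.1, ihb hφ.2]
  | and a b iha ihb =>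
      simp only [THT.impHeight, Nat.max_eq_zero_iff] at hφ
      intro i
      simp only [THT.sat, THT.ltlSat, iha hφ.1, ihb hφ.2]
  | imp a b iha ihb => simp [THT.impHeight] at hφ
  | next a iha =>
      simp only [THT.impHeight] at hφ
      intro i
      simp only [THT.sat, THT.ltlSat, iha hφ]
  | until_ a b iha ihb =>
      simp only [THT.impHeight, Nat.max_eq_zero_iff] at hφ
      intro i
      simp only [THT.sat, THT.ltlSat, iha hφ.1, ihb hφ.2]
  | release a b iha ihb =>
      simp only [THT.impHeight, Nat.max_eq_zero_iff] at hφ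
      intro i
      simp only [THT.sat, THT.ltlSat, iha hφ.1, ihb hφ.2]

lemma tht_h1_aux {P : Type} (φ : THT P) (hφ : THT.impHeight φ ≤ 1)
    (H T : ℕ → Set P) : ∀ i, THT.sat φ H T i → THT.ltlSat φ H i := by
  induction φ with
  | atom p => intro i h; exact h
  | falsum => intro i h; exact h
  | or a b iha ihb =>
      simp only [THT.impHeight, max_le_iff] at hφ
      intro i h
      exact h.imp (iha hφ.1 i) (ihb hφ.2 i)
  | and a b iha ihb =>
      simp only [THT.impHeight, max_le_iff] at hφ
      intro i h
      exact ⟨iha hφ.1 i h.1, ihb hφ.2 i h.2⟩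
  | imp a b iha ihb =>
      simp only [THT.impHeight] at hφ
      have hφ : THT.impHeight a = 0 ∧ THT.impHeight b = 0 := by omega
      intro i h ha
      exact (impfree_sat_iff b hφ.2 H T i).mp
        (h.1 ((impfree_sat_iff a hφ.1 H T i).mpr ha))
  | next a iha =>
      intro i h
      exact iha hφ (i + 1) h
  | until_ a b iha ihb =>
      simp only [THT.impHeight, max_le_iff] at hφ
      rintro i ⟨j, hij, hb, hk⟩
      exact ⟨j, hij, ihb hφ.2 j hb, fun k h1 h2 => iha hφ.1 k (hk k h1 h2)⟩
  | release a b iha ihb =>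
      simp only [THT.impHeight, max_le_iff] at hφ
      intro i h j hij
      rcases h j hij with hb | ⟨k, h1, h2, ha⟩
      · exact Or.inl (ihb hφ.2 j hb)
      · exact Or.inr ⟨k, h1, h2, iha hφ.1 k ha⟩

/-- For formulas of implication height at most 1, a THT model `(H,T)` yields an LTL
model `H`. -/
theorem tht_impHeight_one_to_ltl {P : Type} (φ : THT P) (hφ : THT.impHeight φ ≤ 1)
    (H T : ℕ → Set P) (hHT : ∀ i, H i ⊆ T i) (h : THT.sat φ H T 0) :
    THT.ltlSat φ H 0 := by
  exact tht_h1_aux φ hφ H T 0 h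
end

section
/- The LTL-valid duality Fφ ↔ ¬G¬φ fails in THT: there exist an atom p and a THT interpretation (H,T) such that (H,T),0 ⊨ ¬G¬p but (H,T),0 ⊭ F p. -/
/-- The LTL duality `Fφ ↔ ¬G¬φ` fails in THT: there are an atom `p` and a THT
interpretation satisfying `¬G¬p` but not `F p`. -/
theorem tht_FG_duality_fails :
    ∃ (P : Type) (p : P) (H T : ℕ → Set P), (∀ i, H i ⊆ T i) ∧
      THT.sat (THT.neg (THT.alw (THT.neg (THT.atom p)))) H T 0 ∧
      ¬ THT.sat (THT.ev (THT.atom p)) H T 0 := by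
  refine ⟨Unit, (), fun _ => ∅, fun _ => Set.univ, fun i => Set.empty_subset _, ?_, ?_⟩
  · constructor
    · intro h
      rcases h 0 le_rfl with ⟨_, h2⟩ | ⟨k, _, _, hk⟩
      · exact h2 (Set.mem_univ _)
      · exact hk
    · intro h
      rcases h 0 le_rfl with ⟨_, h2⟩ | ⟨k, _, _, hk⟩
      · exact h2 (Set.mem_univ _)
      · exact hk
  · rintro ⟨j, _, hj, _⟩
    exact hj
end

section
/- The formula G(¬p → X p) has a unique temporal equilibrium model, namely the total interpretation (T,T) where T(i) = ∅ for even i and T(i) = {p} for odd i. -/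
section Aux

open THT

abbrev phi : THT Unit := THT.alw (THT.imp (THT.neg (THT.atom ())) (THT.next (THT.atom ())))

lemma sat_phi (H T : ℕ → Set Unit) :
    THT.sat phi H T 0 ↔
      ∀ j : ℕ, ((() ∉ H j ∧ () ∉ T j) → () ∈ H (j+1)) ∧ (() ∉ T j → () ∈ T (j+1)) := by
  simp only [phi, THT.alw, THT.neg, THT.sat]
  constructor
  · intro h j
    rcases h j (Nat.zero_le _) with h' | ⟨k, -, -, h'⟩
    · exact ⟨fun ⟨a, b⟩ => h'.1 ⟨fun c => a c, fun c => b c⟩, fun a => h'.2 ⟨fun c => a c, fun c => a c⟩⟩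
    · exact absurd h' id
  · intro h j _
    left
    exact ⟨fun ⟨a, b⟩ => (h j).1 ⟨fun c => a c, fun c => b c⟩, fun ⟨a, _⟩ => (h j).2 (fun c => a c)⟩

lemma mem_alt (i : ℕ) : (() ∈ (if Even i then (∅ : Set Unit) else {()})) ↔ ¬ Even i := by
  by_cases h : Even i <;> simp [h]

lemma unit_set_eq {s t : Set Unit} (h : () ∈ s ↔ () ∈ t) : s = t := by
  ext ⟨⟩; exact h

end Aux

/-- `G(¬p → X p)` has a unique temporal equilibrium model: `T i = ∅` for even `i`
and `T i = {p}` for odd `i`. -/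
theorem eqModel_G_negp_imp_Xp_unique :
    ∀ T : ℕ → Set Unit,
      THT.EqModel (THT.alw (THT.imp (THT.neg (THT.atom ())) (THT.next (THT.atom ())))) T ↔
        T = fun i => if Even i then (∅ : Set Unit) else {()} := by
  intro T
  constructor
  · rintro ⟨hsat, hmin⟩
    rw [sat_phi] at hsat
    -- candidate smaller model
    set H : ℕ → Set Unit := fun j => {x | 1 ≤ j ∧ () ∉ T (j-1) ∧ () ∈ T j} with hH
    have hHsub : ∀ i, H i ⊆ T i := by
      intro i x hx
      have : x = () := rfl
      subst this
      exact hx.2.2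
    have hHsat : THT.sat phi H T 0 := by
      rw [sat_phi]
      intro j
      refine ⟨?_, (hsat j).2⟩
      rintro ⟨_, hT⟩
      exact ⟨Nat.le_add_left 1 j, by simpa using hT, (hsat j).2 hT⟩
    have hHT : H = T := by
      by_contra hne
      exact hmin H hHsub hne hHsat
    -- so () ∈ T j → j ≥ 1 ∧ () ∉ T (j-1)
    have key : ∀ j, () ∈ T j → 1 ≤ j ∧ () ∉ T (j-1) := by
      intro j hj
      rw [← hHT] at hj
      exact ⟨hj.1, hj.2.1⟩
    have main : ∀ j, (() ∈ T j ↔ ¬ Even j) := by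
      intro j
      induction j with
      | zero =>
        constructor
        · intro h; exact absurd (key 0 h).1 (by omega)
        · intro h; exact absurd Even.zero h
      | succ n ih =>
        constructor
        · intro h
          have := (key (n+1) h).2
          simp only [Nat.add_sub_cancel] at this
          have : Even n := by by_contra hc; exact this (ih.mpr hc)
          simpa [Nat.even_add_one] using this
        · intro h
          have hn : Even n := by simpa [Nat.even_add_one] using h
          have : () ∉ T n := fun hc => (ih.mp hc) hn
          exact (hsat n).2 this
    funext i
    apply unit_set_eq
    rw [main i, mem_alt]
  · rintro rfl
    constructor
    · rw [sat_phi]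
      intro j
      simp only [mem_alt]
      constructor
      · rintro ⟨_, h2⟩
        simp only [not_not] at h2
        simpa [Nat.even_add_one] using h2
      · intro h2
        simp only [not_not] at h2
        simpa [Nat.even_add_one] using h2
    · intro H hsub hne hs
      rw [sat_phi] at hs
      apply hne
      funext i
      apply unit_set_eq
      have : ∀ j, () ∈ H j ↔ ¬ Even j := by
        intro j
        induction j with
        | zero =>
          constructor
          · intro h
            have := hsub 0 h
            simp at this
          · intro h; exact absurd Even.zero h
        | succ n ih =>
          constructor
          · intro h
            have := hsub (n+1) h
            rw [mem_alt] at this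
            exact this
          · intro h
            have hn : Even n := by simpa [Nat.even_add_one] using h
            have h1 : () ∉ H n := fun hc => (ih.mp hc) hn
            have h2 : () ∉ (if Even n then (∅ : Set Unit) else {()}) := by
              rw [mem_alt]; simpa using hn
            exact (hs n).1 ⟨h1, h2⟩
      rw [this i, mem_alt]
end

section
/- The formula GF p (always eventually p) is LTL satisfiable but has no temporal equilibrium model. -/
/-- `GF p` is LTL satisfiable but has no temporal equilibrium model. -/
theorem GFp_sat_no_eqModel :
    (∃ T : ℕ → Set Unit, THT.ltlSat (THT.alw (THT.ev (THT.atom ()))) T 0) ∧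
      ¬ ∃ T : ℕ → Set Unit, THT.EqModel (THT.alw (THT.ev (THT.atom ()))) T := by
  constructor
  · refine ⟨fun _ => {()}, ?_⟩
    intro j _
    left
    exact ⟨j, le_refl j, rfl, fun k _ _ h => h⟩
  · rintro ⟨T, hTT, hmin⟩
    have hsat : ∀ j : ℕ, ∃ k, j ≤ k ∧ () ∈ T k := by
      intro j
      have := hTT j (Nat.zero_le j)
      rcases this with h | ⟨k, _, _, hf⟩
      · rcases h with ⟨k, hk, hk2, _⟩
        exact ⟨k, hk, hk2⟩
      · exact hf.elim
    have hex : ∃ j, () ∈ T j := by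
      rcases hsat 0 with ⟨k, _, hk⟩; exact ⟨k, hk⟩
    classical
    set j0 := Nat.find hex with hj0
    have hj0mem : () ∈ T j0 := Nat.find_spec hex
    set H : ℕ → Set Unit := fun i => if i = j0 then ∅ else T i with hH
    have hsub : ∀ i, H i ⊆ T i := by
      intro i x hx
      by_cases h : i = j0
      · simp [hH, h] at hx
      · simpa [hH, h] using hx
    have hne : H ≠ T := by
      intro h
      have : () ∈ H j0 := h ▸ hj0mem
      simp [hH] at this
    have hHk : ∀ j, ∃ k, j ≤ k ∧ () ∈ H k := by
      intro j
      rcases hsat (max j (j0 + 1)) with ⟨k, hk, hkT⟩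
      have hkj : j ≤ k := le_trans (le_max_left _ _) hk
      have hkne : k ≠ j0 := by
        have : j0 + 1 ≤ k := le_trans (le_max_right _ _) hk
        omega
      exact ⟨k, hkj, by simpa [hH, hkne] using hkT⟩
    refine hmin H hsub hne ?_
    intro j _
    left
    rcases hHk j with ⟨k, hk, hkH⟩
    refine ⟨k, hk, hkH, ?_⟩
    intro m _ _
    exact ⟨fun h => h, fun h => h⟩
end

section
/- The formula G(¬X p → p) ∧ G(X p → p) is LTL satisfiable (with unique LTL model T = {p}^ω) but has no temporal equilibrium model; in particular (H,T) with H = ∅^ω and T = {p}^ω is a THT model of the formula. -/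
/-- `G(¬X p → p) ∧ G(X p → p)` is LTL satisfiable with unique LTL model `{p}^ω`,
but has no temporal equilibrium model; in particular `(∅^ω, {p}^ω)` is a THT model. -/
theorem G_negXp_Xp_sat_no_eqModel :
    (∀ T : ℕ → Set Unit,
        THT.ltlSat
          (THT.and (THT.alw (THT.imp (THT.neg (THT.next (THT.atom ()))) (THT.atom ())))
            (THT.alw (THT.imp (THT.next (THT.atom ())) (THT.atom ())))) T 0 ↔
          T = fun _ => ({()} : Set Unit)) ∧
    (¬ ∃ T : ℕ → Set Unit,
        THT.EqModel
          (THT.and (THT.alw (THT.imp (THT.neg (THT.next (THT.atom ()))) (THT.atom ())))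
            (THT.alw (THT.imp (THT.next (THT.atom ())) (THT.atom ())))) T) ∧
    THT.sat
      (THT.and (THT.alw (THT.imp (THT.neg (THT.next (THT.atom ()))) (THT.atom ())))
        (THT.alw (THT.imp (THT.next (THT.atom ())) (THT.atom ()))))
      (fun _ => (∅ : Set Unit)) (fun _ => ({()} : Set Unit)) 0 := by
  have hT : ∀ T : ℕ → Set Unit, (∀ j, () ∈ T j) → T = fun _ => ({()} : Set Unit) := by
    intro T h
    funext j; ext x; cases x; simp [h j]
  have hsat3 :
      THT.sat
        (THT.and (THT.alw (THT.imp (THT.neg (THT.next (THT.atom ()))) (THT.atom ())))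
          (THT.alw (THT.imp (THT.next (THT.atom ())) (THT.atom ()))))
        (fun _ => (∅ : Set Unit)) (fun _ => ({()} : Set Unit)) 0 := by
    simp only [THT.alw, THT.neg, THT.sat]
    refine ⟨fun j _ => Or.inl ?_, fun j _ => Or.inl ?_⟩
    · exact ⟨fun h => absurd (h.2 (by simp)) (by simp), fun h => absurd (h.2 (by simp)) (by simp)⟩
    · exact ⟨fun h => absurd h (by simp), fun _ => by simp⟩
  refine ⟨?_, ?_, hsat3⟩
  · intro T
    constructor
    · intro h
      simp only [THT.alw, THT.neg, THT.sat, THT.ltlSat] at h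
      apply hT
      intro j
      rcases h.1 j (Nat.zero_le j) with h1 | ⟨k, _, _, hf⟩
      · rcases h.2 j (Nat.zero_le j) with h2 | ⟨k, _, _, hf⟩
        · by_cases hn : () ∈ T (j + 1)
          · exact h2 hn
          · exact h1 hn
        · exact hf.elim
      · exact hf.elim
    · rintro rfl
      simp only [THT.alw, THT.neg, THT.sat, THT.ltlSat]
      exact ⟨fun j _ => Or.inl fun _ => by simp, fun j _ => Or.inl fun _ => by simp⟩
  · rintro ⟨T, hTT, hmin⟩
    have hall : ∀ j, () ∈ T j := by
      intro j
      simp only [THT.alw, THT.neg, THT.sat] at hTT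
      rcases hTT.1 j (Nat.zero_le j) with h1 | ⟨k, _, _, hf⟩
      · rcases hTT.2 j (Nat.zero_le j) with h2 | ⟨k, _, _, hf⟩
        · by_cases hn : () ∈ T (j + 1)
          · exact h2.1 hn
          · exact h1.1 ⟨fun h => hn h, fun h => hn h⟩
        · exact hf.elim
      · exact hf.elim
    have hTeq := hT T hall
    subst hTeq
    refine hmin (fun _ => (∅ : Set Unit)) (fun i => by simp) ?_ hsat3
    intro h
    have : (() : Unit) ∈ (fun _ => (∅ : Set Unit)) 0 := by rw [h]; simp
    simp at this
end

section
/- The LTL formula GF p is LTL satisfiable but has no minimal LTL model: for every LTL model T of GF p there exists H ⊏ T with H ⊨_LTL GF p. -/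
/-- `GF p` is LTL satisfiable but has no minimal LTL model. -/
theorem GFp_no_minimal_ltl_model :
    (∃ T : ℕ → Set Unit, THT.ltlSat (THT.alw (THT.ev (THT.atom ()))) T 0) ∧
      ∀ T : ℕ → Set Unit, THT.ltlSat (THT.alw (THT.ev (THT.atom ()))) T 0 →
        ∃ H : ℕ → Set Unit, (∀ i, H i ⊆ T i) ∧ H ≠ T ∧
          THT.ltlSat (THT.alw (THT.ev (THT.atom ()))) H 0 := by
  constructor
  · refine ⟨fun _ => {()}, fun j _ => Or.inl ⟨j, le_refl j, rfl, fun k h1 h2 => absurd h2 (by omega)⟩⟩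
  · intro T hT
    obtain (⟨i0, -, hi0, -⟩ | ⟨k, -, hk, hf⟩) := hT 0 (le_refl 0)
    · refine ⟨fun i => if i = i0 then ∅ else T i, ?_, ?_, ?_⟩
      · intro i x hx
        by_cases h : i = i0 <;> simp [h] at hx ⊢
        · exact hx
      · intro h
        have := congrFun h i0
        simp at this
        simp only [THT.ltlSat] at hi0
        rw [← this] at hi0
        exact hi0
      · intro j _
        obtain (⟨k, hk1, hk2, -⟩ | ⟨k, -, -, hf⟩) := hT (max j (i0 + 1)) (Nat.zero_le _)
        · refine Or.inl ⟨k, le_trans (le_max_left _ _) hk1, ?_,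
            fun m _ _ => id⟩
          have hne : k ≠ i0 := by
            have := le_trans (le_max_right j (i0 + 1)) hk1
            omega
          show () ∈ (if k = i0 then ∅ else T k)
          rw [if_neg hne]
          exact hk2
        · exact absurd hf (by simp [THT.ltlSat])
    · exact absurd hf (by simp [THT.ltlSat])
end

section
/- Bisimilar interpretations agree on THT formulas of temporal height at most 1: if M and M' are bisimilar THT interpretations and φ has temporal height ≤ 1, then M ⊨ φ iff M' ⊨ φ. -/
/-- `IsSimulationOf M' M`: `M'` is a simulation of `M`. -/
def IsSimulationOf {α : Type} (M' M : ℕ → α) : Prop :=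
  M 0 = M' 0 ∧ M 1 = M' 1 ∧
    ∀ i : ℕ, ∃ i' : ℕ, M' i' = M i ∧ ∀ k' < i', ∃ k < i, M' k' = M k

/-- `M` and `M'` are bisimilar if each is a simulation of the other. -/
def Bisimilar {α : Type} (M M' : ℕ → α) : Prop :=
  IsSimulationOf M' M ∧ IsSimulationOf M M'

namespace THT

/-- Atemporal formulas only depend on the current letter. -/
lemma sat_atemporal {P : Type} (ψ : THT P) (h : tempHeight ψ = 0) :
    ∀ (H T : ℕ → Set P) (i : ℕ) (H' T' : ℕ → Set P) (j : ℕ),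
      H i = H' j → T i = T' j → (sat ψ H T i ↔ sat ψ H' T' j) := by
  induction ψ with
  | atom p => intro H T i H' T' j hH hT; simp [sat, hH]
  | falsum => intro H T i H' T' j hH hT; simp [sat]
  | or a b iha ihb =>
    intro H T i H' T' j hH hT
    simp only [tempHeight, Nat.max_eq_zero_iff] at h
    simp [sat, iha h.1 H T i H' T' j hH hT, ihb h.2 H T i H' T' j hH hT]
  | and a b iha ihb =>
    intro H T i H' T' j hH hT
    simp only [tempHeight, Nat.max_eq_zero_iff] at h
    simp [sat, iha h.1 H T i H' T' j hH hT, ihb h.2 H T i H' T' j hH hT]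
  | imp a b iha ihb =>
    intro H T i H' T' j hH hT
    simp only [tempHeight, Nat.max_eq_zero_iff] at h
    simp [sat, iha h.1 H T i H' T' j hH hT, ihb h.2 H T i H' T' j hH hT,
      iha h.1 T T i T' T' j hT hT, ihb h.2 T T i T' T' j hT hT]
  | next a iha => simp [tempHeight] at h
  | until_ a b iha ihb => simp [tempHeight] at h
  | release a b iha ihb => simp [tempHeight] at h

lemma bisim_snd {P : Type} {H T H' T' : ℕ → Set P}
    (hb : Bisimilar (fun i => (H i, T i)) (fun i => (H' i, T' i))) :
    Bisimilar (fun i => (T i, T i)) (fun i => (T' i, T' i)) := by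
  obtain ⟨⟨h0, h1, hs⟩, ⟨h0', h1', hs'⟩⟩ := hb
  simp only [Prod.mk.injEq] at h0 h1 h0' h1'
  refine ⟨⟨by simp [h0.2], by simp [h1.2], ?_⟩, ⟨by simp [h0.2], by simp [h1.2], ?_⟩⟩
  · intro i
    obtain ⟨i', hi', hp⟩ := hs i
    simp only [Prod.mk.injEq] at hi'
    refine ⟨i', by simp [hi'.2], ?_⟩
    intro k' hk'
    obtain ⟨k, hk, heq⟩ := hp k' hk'
    simp only [Prod.mk.injEq] at heq
    exact ⟨k, hk, by simp [heq.2]⟩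
  · intro i
    obtain ⟨i', hi', hp⟩ := hs' i
    simp only [Prod.mk.injEq] at hi'
    refine ⟨i', by simp [hi'.2], ?_⟩
    intro k' hk'
    obtain ⟨k, hk, heq⟩ := hp k' hk'
    simp only [Prod.mk.injEq] at heq
    exact ⟨k, hk, by simp [heq.2]⟩

lemma bisim_agree_aux {P : Type} (φ : THT P) : tempHeight φ ≤ 1 →
    ∀ (H T H' T' : ℕ → Set P),
      Bisimilar (fun i => (H i, T i)) (fun i => (H' i, T' i)) →
      (sat φ H T 0 ↔ sat φ H' T' 0) := by
  induction φ with
  | atom p =>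
    intro _ H T H' T' hbis
    have h0 := hbis.1.1
    simp only [Prod.mk.injEq] at h0
    simp [sat, h0.1]
  | falsum => intro _ H T H' T' hbis; simp [sat]
  | or a b iha ihb =>
    intro hφ H T H' T' hbis
    simp only [tempHeight, max_le_iff] at hφ
    simp [sat, iha hφ.1 H T H' T' hbis, ihb hφ.2 H T H' T' hbis]
  | and a b iha ihb =>
    intro hφ H T H' T' hbis
    simp only [tempHeight, max_le_iff] at hφ
    simp [sat, iha hφ.1 H T H' T' hbis, ihb hφ.2 H T H' T' hbis]
  | imp a b iha ihb =>
    intro hφ H T H' T' hbis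
    simp only [tempHeight, max_le_iff] at hφ
    have hT := bisim_snd hbis
    simp [sat, iha hφ.1 H T H' T' hbis, ihb hφ.2 H T H' T' hbis,
      iha hφ.1 T T T' T' hT, ihb hφ.2 T T T' T' hT]
  | next a iha =>
    intro hφ H T H' T' hbis
    have ha : tempHeight a = 0 := by
      simp only [tempHeight] at hφ; omega
    have h1 := hbis.1.2.1
    simp only [Prod.mk.injEq] at h1
    exact sat_atemporal a ha H T 1 H' T' 1 h1.1 h1.2
  | until_ a b iha ihb =>
    intro hφ H T H' T' hbis
    have hab : tempHeight a = 0 ∧ tempHeight b = 0 := by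
      simp only [tempHeight] at hφ; omega
    constructor
    · rintro ⟨j, -, hbj, haj⟩
      obtain ⟨j', hj', hp⟩ := hbis.1.2.2 j
      simp only [Prod.mk.injEq] at hj'
      refine ⟨j', Nat.zero_le _, (sat_atemporal b hab.2 H T j H' T' j'
        hj'.1.symm hj'.2.symm).1 hbj, ?_⟩
      intro k' _ hk'
      obtain ⟨k, hk, heq⟩ := hp k' hk'
      simp only [Prod.mk.injEq] at heq
      exact (sat_atemporal a hab.1 H T k H' T' k' heq.1.symm heq.2.symm).1
        (haj k (Nat.zero_le _) hk)
    · rintro ⟨j', -, hbj, haj⟩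
      obtain ⟨j, hj, hp⟩ := hbis.2.2.2 j'
      simp only [Prod.mk.injEq] at hj
      refine ⟨j, Nat.zero_le _, (sat_atemporal b hab.2 H' T' j' H T j
        hj.1.symm hj.2.symm).1 hbj, ?_⟩
      intro k _ hk
      obtain ⟨k', hk', heq⟩ := hp k hk
      simp only [Prod.mk.injEq] at heq
      exact (sat_atemporal a hab.1 H' T' k' H T k heq.1.symm heq.2.symm).1
        (haj k' (Nat.zero_le _) hk')
  | release a b iha ihb =>
    intro hφ H T H' T' hbis
    have hab : tempHeight a = 0 ∧ tempHeight b = 0 := by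
      simp only [tempHeight] at hφ; omega
    constructor
    · intro hrel j' _
      obtain ⟨j, hj, hp⟩ := hbis.2.2.2 j'
      simp only [Prod.mk.injEq] at hj
      rcases hrel j (Nat.zero_le _) with hbj | ⟨k, -, hk, hak⟩
      · exact Or.inl ((sat_atemporal b hab.2 H T j H' T' j' hj.1 hj.2).1 hbj)
      · obtain ⟨k', hk', heq⟩ := hp k hk
        simp only [Prod.mk.injEq] at heq
        exact Or.inr ⟨k', Nat.zero_le _, hk',
          (sat_atemporal a hab.1 H T k H' T' k' heq.1 heq.2).1 hak⟩
    · intro hrel j _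
      obtain ⟨j', hj', hp⟩ := hbis.1.2.2 j
      simp only [Prod.mk.injEq] at hj'
      rcases hrel j' (Nat.zero_le _) with hbj | ⟨k', -, hk', hak⟩
      · exact Or.inl ((sat_atemporal b hab.2 H' T' j' H T j hj'.1 hj'.2).1 hbj)
      · obtain ⟨k, hk, heq⟩ := hp k' hk'
        simp only [Prod.mk.injEq] at heq
        exact Or.inr ⟨k, Nat.zero_le _, hk,
          (sat_atemporal a hab.1 H' T' k' H T k heq.1 heq.2).1 hak⟩

end THT

/-- Bisimilar THT interpretations agree on formulas of temporal height at most 1. -/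
theorem bisimilar_agree_tempHeight_one {P : Type} (H T H' T' : ℕ → Set P)
    (hHT : ∀ i, H i ⊆ T i) (hHT' : ∀ i, H' i ⊆ T' i)
    (hbis : Bisimilar (fun i => (H i, T i)) (fun i => (H' i, T' i)))
    (φ : THT P) (hφ : THT.tempHeight φ ≤ 1) :
    THT.sat φ H T 0 ↔ THT.sat φ H' T' 0 :=
  THT.bisim_agree_aux φ hφ H T H' T' hbis
end

section
/- Every contraction of an interpretation is bisimilar to it: if M' is a contraction of M, then M and M' are bisimilar. -/
/-- `M'` is a contraction of `M`: `M' = M(n 0), M(n 1), ...` for an increasing sequence,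
eventually constantly repeating `M (n (k+1))`, with `{n 0, ..., n k}` the minimal set
containing `0`, `1`, and all least positions of each value of `M`. -/
def IsContractionOf {α : Type} (M' M : ℕ → α) : Prop :=
  ∃ (n : ℕ → ℕ) (k : ℕ), StrictMono n ∧ (∀ i, M' i = M (n i)) ∧
    (∀ i, k + 1 ≤ i → M (n i) = M (n (k + 1))) ∧
    (∀ j : ℕ, (j = 0 ∨ j = 1 ∨ ∀ l < j, M l ≠ M j) ↔ ∃ i ≤ k, n i = j)

/-- Every contraction of an interpretation is bisimilar to it. -/
theorem contraction_bisimilar {α : Type} (M M' : ℕ → α)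
    (h : IsContractionOf M' M) : Bisimilar M M' := by
  obtain ⟨n, k, hmono, hM', hconst, hiff⟩ := h
  have hle : ∀ i, i ≤ n i := fun i => hmono.le_apply
  have h0 : n 0 = 0 := by
    obtain ⟨i, hik, hni⟩ := (hiff 0).1 (Or.inl rfl)
    have := hle i
    have hi0 : i = 0 := by omega
    subst hi0; exact hni
  have h1 : n 1 = 1 := by
    obtain ⟨i, hik, hni⟩ := (hiff 1).1 (Or.inr (Or.inl rfl))
    have := hle i
    have hi1 : i ≤ 1 := by omega
    interval_cases i
    · omega
    · exact hni
  have hM0 : M 0 = M' 0 := by rw [hM' 0, h0]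
  have hM1 : M 1 = M' 1 := by rw [hM' 1, h1]
  have key : ∀ p : ℕ, ∃ j, n j ≤ p ∧ M (n j) = M p := by
    intro p
    classical
    have hne : ∃ m, M m = M p := ⟨p, rfl⟩
    have hmp : M (Nat.find hne) = M p := Nat.find_spec hne
    have hmin : ∀ l < Nat.find hne, M l ≠ M (Nat.find hne) := fun l hl hc =>
      Nat.find_min hne hl (hc.trans hmp)
    obtain ⟨j, hjk, hnj⟩ := (hiff (Nat.find hne)).1 (Or.inr (Or.inr hmin))
    exact ⟨j, by rw [hnj]; exact Nat.find_min' hne rfl, by rw [hnj]; exact hmp⟩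
  constructor
  · refine ⟨hM0, hM1, fun i => ?_⟩
    obtain ⟨j, hjle, hjeq⟩ := key i
    refine ⟨j, by rw [hM']; exact hjeq, fun k' hk' => ?_⟩
    exact ⟨n k', lt_of_lt_of_le (hmono hk') hjle, hM' k'⟩
  · refine ⟨hM0.symm, hM1.symm, fun i => ?_⟩
    refine ⟨n i, (hM' i).symm, fun k' hk' => ?_⟩
    obtain ⟨j, hjle, hjeq⟩ := key k'
    have hjlt : n j < n i := lt_of_le_of_lt hjle hk'
    exact ⟨j, hmono.lt_iff_lt.1 hjlt, by rw [hM']; exact hjeq.symm⟩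
end

section
/- Small-model property for THT₁ equilibrium models: if a THT formula φ of temporal height at most 1 over atoms P has a temporal equilibrium model, then it has a strongly ultimately periodic equilibrium model of size at most 2 + 2^{|P|}. -/
namespace THT

variable {P : Type}

/-- Propositional (temporal-height-0) satisfaction depends only on the pair of states. -/
lemma sat_pair (ψ : THT P) :
    tempHeight ψ = 0 → ∀ (H T H' T' : ℕ → Set P) (i i' : ℕ), H i = H' i' → T i = T' i' →
      (sat ψ H T i ↔ sat ψ H' T' i') := by
  induction ψ with
  | atom p =>
      intro _ H T H' T' i i' hH hT
      simp only [sat]; rw [hH]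
  | falsum => intro _ _ _ _ _ _ _ _ _; exact Iff.rfl
  | or a b iha ihb =>
      intro hψ H T H' T' i i' hH hT
      simp only [tempHeight, Nat.max_eq_zero_iff] at hψ
      simp only [sat]
      rw [iha hψ.1 H T H' T' i i' hH hT, ihb hψ.2 H T H' T' i i' hH hT]
  | and a b iha ihb =>
      intro hψ H T H' T' i i' hH hT
      simp only [tempHeight, Nat.max_eq_zero_iff] at hψ
      simp only [sat]
      rw [iha hψ.1 H T H' T' i i' hH hT, ihb hψ.2 H T H' T' i i' hH hT]
  | imp a b iha ihb =>
      intro hψ H T H' T' i i' hH hT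
      simp only [tempHeight, Nat.max_eq_zero_iff] at hψ
      simp only [sat]
      rw [iha hψ.1 H T H' T' i i' hH hT, ihb hψ.2 H T H' T' i i' hH hT,
          iha hψ.1 T T T' T' i i' hT hT, ihb hψ.2 T T T' T' i i' hT hT]
  | next a ih => intro hψ; exact absurd hψ (by simp [tempHeight])
  | until_ a b _ _ => intro hψ; exact absurd hψ (by simp [tempHeight])
  | release a b _ _ => intro hψ; exact absurd hψ (by simp [tempHeight])

/-- Transfer of satisfaction at time `0` for temporal-height-≤1 formulas along an index
reassignment `g`. -/
lemma sat_transfer (T T' : ℕ → Set P) (g : ℕ → ℕ)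
    (hT : ∀ i, T i = T' (g i)) (hg0 : g 0 = 0) (hg1 : g 1 = 1)
    (hC1 : ∀ k, ∃ J, g J = k ∧ ∀ i, i < J → g i < k)
    (hC2 : ∀ j k, k < g j → ∃ i, i < j ∧ g i = k)
    (ψ : THT P) :
    tempHeight ψ ≤ 1 → ∀ (H H' : ℕ → Set P), (∀ i, H i = H' (g i)) →
      (sat ψ H T 0 ↔ sat ψ H' T' 0) := by
  induction ψ with
  | atom p =>
      intro _ H H' hH
      simp only [sat]
      rw [hH 0, hg0]
  | falsum => intro _ _ _ _; exact Iff.rfl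
  | or a b iha ihb =>
      intro hψ H H' hH
      simp only [tempHeight, max_le_iff] at hψ
      simp only [sat]
      rw [iha hψ.1 H H' hH, ihb hψ.2 H H' hH]
  | and a b iha ihb =>
      intro hψ H H' hH
      simp only [tempHeight, max_le_iff] at hψ
      simp only [sat]
      rw [iha hψ.1 H H' hH, ihb hψ.2 H H' hH]
  | imp a b iha ihb =>
      intro hψ H H' hH
      simp only [tempHeight, max_le_iff] at hψ
      simp only [sat]
      rw [iha hψ.1 H H' hH, ihb hψ.2 H H' hH, iha hψ.1 T T' hT, ihb hψ.2 T T' hT]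
  | next a ih =>
      intro hψ H H' hH
      simp only [tempHeight] at hψ
      have ha : tempHeight a = 0 := by omega
      simp only [sat]
      exact sat_pair a ha H T H' T' 1 1 (by rw [hH 1, hg1]) (by rw [hT 1, hg1])
  | until_ a b _ _ =>
      intro hψ H H' hH
      simp only [tempHeight] at hψ
      have h0 := Nat.le_of_succ_le_succ hψ
      have ha : tempHeight a = 0 := Nat.le_zero.mp (le_trans (le_max_left _ _) h0)
      have hb : tempHeight b = 0 := Nat.le_zero.mp (le_trans (le_max_right _ _) h0)
      simp only [sat]
      constructor
      · rintro ⟨j, -, hbj, haj⟩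
        refine ⟨g j, Nat.zero_le _, (sat_pair b hb H T H' T' j (g j) (hH j) (hT j)).mp hbj, ?_⟩
        intro k _ hk
        obtain ⟨i, hij, hgi⟩ := hC2 j k hk
        exact (sat_pair a ha H T H' T' i k (by rw [hH i, hgi]) (by rw [hT i, hgi])).mp
          (haj i (Nat.zero_le _) hij)
      · rintro ⟨k, -, hbk, hak⟩
        obtain ⟨J, hgJ, hlt⟩ := hC1 k
        refine ⟨J, Nat.zero_le _,
          (sat_pair b hb H T H' T' J k (by rw [hH J, hgJ]) (by rw [hT J, hgJ])).mpr hbk, ?_⟩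
        intro i _ hiJ
        exact (sat_pair a ha H T H' T' i (g i) (hH i) (hT i)).mpr
          (hak (g i) (Nat.zero_le _) (hlt i hiJ))
  | release a b _ _ =>
      intro hψ H H' hH
      simp only [tempHeight] at hψ
      have h0 := Nat.le_of_succ_le_succ hψ
      have ha : tempHeight a = 0 := Nat.le_zero.mp (le_trans (le_max_left _ _) h0)
      have hb : tempHeight b = 0 := Nat.le_zero.mp (le_trans (le_max_right _ _) h0)
      simp only [sat]
      constructor
      · intro hold k _
        obtain ⟨J, hgJ, hlt⟩ := hC1 k
        rcases hold J (Nat.zero_le _) with hb' | ⟨i, -, hiJ, hai⟩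
        · exact Or.inl
            ((sat_pair b hb H T H' T' J k (by rw [hH J, hgJ]) (by rw [hT J, hgJ])).mp hb')
        · exact Or.inr ⟨g i, Nat.zero_le _, hlt i hiJ,
            (sat_pair a ha H T H' T' i (g i) (hH i) (hT i)).mp hai⟩
      · intro hnew j _
        rcases hnew (g j) (Nat.zero_le _) with hb' | ⟨k, -, hk, hak⟩
        · exact Or.inl ((sat_pair b hb H T H' T' j (g j) (hH j) (hT j)).mpr hb')
        · obtain ⟨i, hij, hgi⟩ := hC2 j k hk
          exact Or.inr ⟨i, Nat.zero_le _, hij,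
            (sat_pair a ha H T H' T' i k (by rw [hH i, hgi]) (by rw [hT i, hgi])).mpr hak⟩

end THT

/-- Small-model property for THT₁: if a formula of temporal height ≤ 1 has a temporal
equilibrium model, it has a strongly ultimately periodic one of size at most
`2 + 2 ^ |P|`. -/
theorem eqModel_small_model_tempHeight_one {P : Type} [Fintype P] (φ : THT P)
    (hφ : THT.tempHeight φ ≤ 1) (h : ∃ T : ℕ → Set P, THT.EqModel φ T) :
    ∃ (T : ℕ → Set P) (j : ℕ), THT.EqModel φ T ∧ (∀ k, j ≤ k → T k = T j) ∧
      j + 1 ≤ 2 + 2 ^ Fintype.card P := by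
  classical
  obtain ⟨T, hsat, hmin⟩ := h
  -- a state occurring infinitely often
  obtain ⟨s, hsinf⟩ : ∃ s : Set P, (T ⁻¹' {s}).Infinite := by
    obtain ⟨s, hs⟩ := Finite.exists_infinite_fiber T
    exact ⟨s, Set.infinite_coe_iff.mp hs⟩
  -- first-occurrence positions (among positions ≥ 1)
  set FO : Set ℕ := {i | 1 ≤ i ∧ ∀ i', 1 ≤ i' → i' < i → T i' ≠ T i} with hFOdef
  have hFOinj : Set.InjOn T FO := by
    intro x hx y hy hxy
    rcases lt_trichotomy x y with hlt | he | hlt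
    · exact absurd hxy (hy.2 x hx.1 hlt)
    · exact he
    · exact absurd hxy.symm (hx.2 y hy.1 hlt)
  have hFOfin : FO.Finite := Set.Finite.of_finite_image (Set.toFinite _) hFOinj
  have h1FO : (1 : ℕ) ∈ FO := ⟨le_refl 1, fun i' h1 hlt => by omega⟩
  set N := sSup FO with hNdef
  have hleN : ∀ i ∈ FO, i ≤ N := fun i hi => le_csSup hFOfin.bddAbove hi
  have hN1 : 1 ≤ N := hleN 1 h1FO
  set tail : Set ℕ := {i | N < i ∧ T i = s} with htaildef
  have htailinf : tail.Infinite := by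
    have h1 : (T ⁻¹' {s} \ {i | i ≤ N}).Infinite := hsinf.diff (Set.finite_le_nat N)
    refine h1.mono ?_
    rintro i ⟨hi1, hi2⟩
    exact ⟨not_le.mp hi2, hi1⟩
  set D : Set ℕ := {0} ∪ FO ∪ tail with hDdef
  have hDinf : {n | n ∈ D}.Infinite := htailinf.mono fun i hi => Or.inr hi
  set old : ℕ → ℕ := Nat.nth (· ∈ D) with holddef
  set idx : ℕ → ℕ := Nat.count (· ∈ D) with hidxdef
  have hmemD : ∀ k, old k ∈ D := fun k => Nat.nth_mem_of_infinite hDinf k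
  have holdmono : StrictMono old := Nat.nth_strictMono hDinf
  have holdidx : ∀ d ∈ D, old (idx d) = d := fun d hd => Nat.nth_count hd
  have hidxold : ∀ k, idx (old k) = k := fun k => holdmono.injective (holdidx _ (hmemD k))
  have h0D : (0 : ℕ) ∈ D := Or.inl (Or.inl rfl)
  have h1D : (1 : ℕ) ∈ D := Or.inl (Or.inr h1FO)
  have hold0 : old 0 = 0 := by
    have h1 : old 0 ≤ old (idx 0) := holdmono.monotone (Nat.zero_le _)
    rw [holdidx 0 h0D] at h1
    omega
  have hold1 : old 1 = 1 := by
    have h1 : old (idx 1) = 1 := holdidx 1 h1D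
    have h2 : 1 ≤ idx 1 := by
      rcases Nat.eq_zero_or_pos (idx 1) with h | h
      · rw [h, hold0] at h1; omega
      · exact h
    have h3 : old 1 ≤ old (idx 1) := holdmono.monotone h2
    have h4 : old 0 < old 1 := holdmono Nat.zero_lt_one
    omega
  have hself : ∀ k, k ≤ old k := by
    intro k
    induction k with
    | zero => exact Nat.zero_le _
    | succ n ih => exact Nat.succ_le_of_lt (lt_of_le_of_lt ih (holdmono (Nat.lt_succ_self n)))
  -- first occurrence of the value at position i
  set fi : ℕ → ℕ := fun i => sInf {i' | 1 ≤ i' ∧ T i' = T i} with hfidef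
  have hfi_spec : ∀ i, 1 ≤ i → 1 ≤ fi i ∧ T (fi i) = T i ∧ fi i ≤ i ∧ fi i ∈ FO := by
    intro i hi
    have hne : ({i' | 1 ≤ i' ∧ T i' = T i}).Nonempty := ⟨i, hi, rfl⟩
    have hmem := Nat.sInf_mem hne
    have hle : fi i ≤ i := Nat.sInf_le ⟨hi, rfl⟩
    refine ⟨hmem.1, hmem.2, hle, hmem.1, ?_⟩
    intro i' h1 hlt heq
    have hm : i' ∈ {i' | 1 ≤ i' ∧ T i' = T i} := ⟨h1, heq.trans hmem.2⟩
    exact absurd (Nat.sInf_le hm) (not_le.mpr hlt)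
  set rep : ℕ → ℕ := fun i => if i = 0 then 0 else if N < i ∧ T i = s then i else fi i
    with hrepdef
  have hrepD : ∀ i, rep i ∈ D ∧ T (rep i) = T i ∧ rep i ≤ i := by
    intro i
    by_cases h0 : i = 0
    · subst h0
      have hr : rep 0 = 0 := by simp only [hrepdef, if_pos rfl]
      rw [hr]
      exact ⟨h0D, rfl, le_refl 0⟩
    · by_cases ht : N < i ∧ T i = s
      · have hr : rep i = i := by simp only [hrepdef, if_neg h0, if_pos ht]
        rw [hr]
        exact ⟨Or.inr ht, rfl, le_refl i⟩
      · have h1 : 1 ≤ i := Nat.one_le_iff_ne_zero.mpr h0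
        obtain ⟨ha, hb, hc, hd⟩ := hfi_spec i h1
        have hr : rep i = fi i := by simp only [hrepdef, if_neg h0, if_neg ht]
        rw [hr]
        exact ⟨Or.inl (Or.inr hd), hb, hc⟩
  have hrepfix : ∀ d ∈ D, rep d = d := by
    intro d hd
    rcases hd with (h | h) | h
    · have h0 : d = 0 := h
      simp only [hrepdef, h0, if_pos rfl]
    · have h0 : d ≠ 0 := by have := h.1; omega
      by_cases ht : N < d ∧ T d = s
      · simp only [hrepdef, if_neg h0, if_pos ht]
      · simp only [hrepdef, if_neg h0, if_neg ht]
        obtain ⟨ha, hb, hc, -⟩ := hfi_spec d h.1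
        rcases lt_or_eq_of_le hc with hlt | he
        · exact absurd hb (h.2 (fi d) ha hlt)
        · exact he
    · have ht : N < d ∧ T d = s := h
      have h0 : d ≠ 0 := by have := ht.1; omega
      simp only [hrepdef, if_neg h0, if_pos ht]
  set g : ℕ → ℕ := fun i => idx (rep i) with hgdef
  set T' : ℕ → Set P := fun k => T (old k) with hT'def
  have hTT' : ∀ i, T i = T' (g i) := by
    intro i
    show T i = T (old (idx (rep i)))
    rw [holdidx _ (hrepD i).1]
    exact ((hrepD i).2.1).symm
  have hg0 : g 0 = 0 := by
    show idx (rep 0) = 0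
    have : rep 0 = 0 := by simp only [hrepdef, if_pos rfl]
    rw [this]
    exact Nat.count_zero _
  have hg1 : g 1 = 1 := by
    show idx (rep 1) = 1
    have hrep1 : rep 1 = 1 := hrepfix 1 h1D
    have h1 := hidxold 1
    rw [hold1] at h1
    rw [hrep1]
    exact h1
  have hgold : ∀ k, g (old k) = k := by
    intro k
    show idx (rep (old k)) = k
    rw [hrepfix _ (hmemD k)]
    exact hidxold k
  have hidxlt : ∀ a, a ∈ D → ∀ b, b ∈ D → a < b → idx a < idx b := by
    intro a ha b hb hab
    by_contra hle
    push_neg at hle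
    have h1 := holdmono.monotone hle
    rw [holdidx a ha, holdidx b hb] at h1
    omega
  have hC1 : ∀ k, ∃ J, g J = k ∧ ∀ i, i < J → g i < k := by
    intro k
    refine ⟨old k, hgold k, ?_⟩
    intro i hi
    have h1 : rep i < old k := lt_of_le_of_lt (hrepD i).2.2 hi
    have h2 := hidxlt (rep i) (hrepD i).1 (old k) (hmemD k) h1
    rwa [hidxold k] at h2
  have hC2 : ∀ j k, k < g j → ∃ i, i < j ∧ g i = k := by
    intro j k hk
    refine ⟨old k, ?_, hgold k⟩
    have h1 : old k < old (g j) := holdmono hk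
    have h2 : old (g j) = rep j := holdidx _ (hrepD j).1
    have h3 := (hrepD j).2.2
    omega
  -- total satisfaction transfers
  have htot : THT.sat φ T' T' 0 :=
    (THT.sat_transfer T T' g hTT' hg0 hg1 hC1 hC2 φ hφ T T' hTT').mp hsat
  -- minimality transfers
  have hmin' : ∀ H' : ℕ → Set P, (∀ i, H' i ⊆ T' i) → H' ≠ T' → ¬ THT.sat φ H' T' 0 := by
    intro H' hsub hne hsat'
    set H : ℕ → Set P := fun i => H' (g i) with hHdef
    have hHsat : THT.sat φ H T 0 :=
      (THT.sat_transfer T T' g hTT' hg0 hg1 hC1 hC2 φ hφ H H' (fun _ => rfl)).mpr hsat'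
    have hHsub : ∀ i, H i ⊆ T i := by
      intro i
      rw [hTT' i]
      exact hsub (g i)
    have hHne : H ≠ T := by
      intro he
      apply hne
      funext k
      have h1 : H (old k) = T (old k) := congrFun he (old k)
      have h2 : H (old k) = H' k := by
        show H' (g (old k)) = H' k
        rw [hgold k]
      rw [h2] at h1
      exact h1
    exact hmin H hHsub hHne hHsat
  -- the period start
  set Kset : Set ℕ := {k | N < old k} with hKdef
  have hKne : Kset.Nonempty := ⟨N + 1, lt_of_lt_of_le (Nat.lt_succ_self N) (hself (N + 1))⟩
  set j := sInf Kset with hjdef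
  have hjmem : N < old j := Nat.sInf_mem hKne
  have hconst : ∀ k, j ≤ k → T' k = T' j := by
    have key : ∀ k, j ≤ k → T (old k) = s := by
      intro k hk
      have h1 : N < old k := lt_of_lt_of_le hjmem (holdmono.monotone hk)
      rcases hmemD k with (h | h) | h
      · have h0 : old k = 0 := h
        omega
      · exact absurd (hleN _ h) (not_le.mpr h1)
      · exact h.2
    intro k hk
    show T (old k) = T (old j)
    rw [key k hk, key j (le_refl j)]
  have hmemFO : ∀ k : ℕ, k < j → old k = 0 ∨ old k ∈ FO := by
    intro k hk
    have h1 : k ∉ Kset := fun hmem => absurd (Nat.sInf_le hmem) (not_le.mpr hk)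
    have h2 : ¬ N < old k := h1
    rcases hmemD k with (h | h) | h
    · exact Or.inl h
    · exact Or.inr h
    · exact absurd h.1 h2
  have hbound : j ≤ 1 + 2 ^ Fintype.card P := by
    have key : ∀ a b : Fin j, (a : ℕ) < (b : ℕ) →
        (if old a = 0 then (none : Option (P → Bool))
          else some fun p => decide (p ∈ T (old a))) ≠
        (if old b = 0 then none else some fun p => decide (p ∈ T (old b))) := by
      intro a b hab
      have hlt : old a < old b := holdmono hab
      rcases hmemFO a a.2 with h0 | hFOa
      · have hb0 : old b ≠ 0 := by omega
        simp [h0, hb0]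
      · have ha0 : old a ≠ 0 := by have := hFOa.1; omega
        have hb0 : old b ≠ 0 := by omega
        rcases hmemFO b b.2 with h0' | hFOb
        · omega
        · have hTne : T (old a) ≠ T (old b) := hFOb.2 (old a) hFOa.1 hlt
          simp only [if_neg ha0, if_neg hb0, ne_eq, Option.some.injEq]
          intro hfe
          apply hTne
          ext p
          have h1 := congrFun hfe p
          simpa using h1
    have hinj : Function.Injective (fun k : Fin j =>
        if old k = 0 then (none : Option (P → Bool))
        else some fun p => decide (p ∈ T (old k))) := by
      intro a b he
      by_contra hne
      rcases lt_trichotomy (a : ℕ) (b : ℕ) with h | h | h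
      · exact key a b h he
      · exact hne (Fin.ext h)
      · exact key b a h he.symm
    have hcard := Fintype.card_le_of_injective _ hinj
    rw [Fintype.card_fin, Fintype.card_option, Fintype.card_fun, Fintype.card_bool] at hcard
    omega
  exact ⟨T', j, ⟨htot, hmin'⟩, hconst, by omega⟩
end

section
/- For a THT formula φ of implication height at most 1 satisfying the almost-empty requirement (every equilibrium model of φ has finitely many non-empty positions): φ has a temporal equilibrium model if and only if the LTL formula φ ∧ FG(⋀_{p∈P} ¬p) is LTL satisfiable. -/
/-- Conjunction of the negations of a list of atoms. -/
def conjNeg {P : Type} (l : List P) : THT P :=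
  l.foldr (fun p acc => THT.and (THT.neg (THT.atom p)) acc) THT.top

namespace THT

variable {P : Type}

theorem sat_total (φ : THT P) : ∀ T i, sat φ T T i ↔ ltlSat φ T i := by
  induction φ with
  | atom p => intro T i; rfl
  | falsum => intro T i; rfl
  | or a b iha ihb => intro T i; simp [sat, ltlSat, iha, ihb]
  | and a b iha ihb => intro T i; simp [sat, ltlSat, iha, ihb]
  | imp a b iha ihb => intro T i; simp [sat, ltlSat, iha, ihb]
  | next a iha => intro T i; simp [sat, ltlSat, iha]
  | until_ a b iha ihb => intro T i; simp [sat, ltlSat, iha, ihb]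
  | release a b iha ihb => intro T i; simp [sat, ltlSat, iha, ihb]

theorem sat_impfree (φ : THT P) (h : impHeight φ = 0) :
    ∀ H T i, sat φ H T i ↔ ltlSat φ H i := by
  induction φ with
  | atom p => intro H T i; rfl
  | falsum => intro H T i; rfl
  | or a b iha ihb =>
    simp only [impHeight, Nat.max_eq_zero_iff] at h
    intro H T i; simp [sat, ltlSat, iha h.1, ihb h.2]
  | and a b iha ihb =>
    simp only [impHeight, Nat.max_eq_zero_iff] at h
    intro H T i; simp [sat, ltlSat, iha h.1, ihb h.2]
  | imp a b iha ihb => simp [impHeight] at h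
  | next a iha =>
    simp only [impHeight] at h
    intro H T i; simp [sat, ltlSat, iha h]
  | until_ a b iha ihb =>
    simp only [impHeight, Nat.max_eq_zero_iff] at h
    intro H T i; simp [sat, ltlSat, iha h.1, ihb h.2]
  | release a b iha ihb =>
    simp only [impHeight, Nat.max_eq_zero_iff] at h
    intro H T i; simp [sat, ltlSat, iha h.1, ihb h.2]

theorem sat_to_ltl (φ : THT P) (h : impHeight φ ≤ 1) :
    ∀ H T i, sat φ H T i → ltlSat φ H i := by
  induction φ with
  | atom p => intro H T i hs; exact hs
  | falsum => intro H T i hs; exact hs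
  | or a b iha ihb =>
    simp only [impHeight, max_le_iff] at h
    intro H T i hs
    exact hs.elim (fun h' => Or.inl (iha h.1 H T i h'))
      (fun h' => Or.inr (ihb h.2 H T i h'))
  | and a b iha ihb =>
    simp only [impHeight, max_le_iff] at h
    intro H T i hs
    exact ⟨iha h.1 H T i hs.1, ihb h.2 H T i hs.2⟩
  | imp a b iha ihb =>
    simp only [impHeight] at h
    have ha : impHeight a = 0 := by omega
    have hb : impHeight b = 0 := by omega
    intro H T i hs hla
    exact (sat_impfree b hb H T i).mp (hs.1 ((sat_impfree a ha H T i).mpr hla))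
  | next a iha =>
    simp only [impHeight] at h
    intro H T i hs; exact iha h H T (i + 1) hs
  | until_ a b iha ihb =>
    simp only [impHeight, max_le_iff] at h
    intro H T i hs
    obtain ⟨j, hij, hbj, hk⟩ := hs
    exact ⟨j, hij, ihb h.2 H T j hbj, fun k h1 h2 => iha h.1 H T k (hk k h1 h2)⟩
  | release a b iha ihb =>
    simp only [impHeight, max_le_iff] at h
    intro H T i hs j hij
    rcases hs j hij with h' | ⟨k, h1, h2, h3⟩
    · exact Or.inl (ihb h.2 H T j h')
    · exact Or.inr ⟨k, h1, h2, iha h.1 H T k h3⟩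

theorem ltlSat_top (T : ℕ → Set P) (i : ℕ) : ltlSat (top : THT P) T i := by
  intro h; exact h

end THT

theorem ltlSat_conjNeg {P : Type} (l : List P) (T : ℕ → Set P) (i : ℕ) :
    THT.ltlSat (conjNeg l) T i ↔ ∀ p ∈ l, p ∉ T i := by
  induction l with
  | nil => simp [conjNeg, THT.top, THT.neg, THT.ltlSat]
  | cons p l ih =>
    simp only [conjNeg, List.foldr_cons] at *
    simp only [THT.ltlSat, THT.neg, List.mem_cons]
    constructor
    · rintro ⟨h1, h2⟩ q (rfl | hq)
      · exact h1
      · exact ih.mp h2 q hq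
    · intro h
      exact ⟨h p (Or.inl rfl), ih.mpr fun q hq => h q (Or.inr hq)⟩

theorem ltlSat_FG_empty {P : Type} [Fintype P] [DecidableEq P] (T : ℕ → Set P) :
    THT.ltlSat (THT.ev (THT.alw (conjNeg (Finset.univ : Finset P).toList))) T 0 ↔
      ∃ m, ∀ k, m ≤ k → T k = ∅ := by
  constructor
  · rintro ⟨j, -, hj, -⟩
    refine ⟨j, fun k hk => ?_⟩
    rcases hj k hk with h | ⟨_, _, _, h⟩
    · rw [Set.eq_empty_iff_forall_notMem]
      intro p
      exact (ltlSat_conjNeg _ T k).mp h p (by simp [Finset.mem_toList])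
    · exact h.elim
  · rintro ⟨m, hm⟩
    refine ⟨m, Nat.zero_le m, fun k hk => Or.inl ?_, fun k _ _ => THT.ltlSat_top T k⟩
    exact (ltlSat_conjNeg _ T k).mpr (by simp [hm k hk])

/-- For a formula of implication height at most 1 satisfying the almost-empty
requirement, having a temporal equilibrium model is equivalent to LTL satisfiability
of `φ ∧ FG(⋀_{p ∈ P} ¬p)`. -/
theorem eqModel_iff_ltl_sat_almost_empty {P : Type} [Fintype P] [DecidableEq P]
    (φ : THT P) (hφ : THT.impHeight φ ≤ 1)
    (hae : ∀ T : ℕ → Set P, THT.EqModel φ T → {i : ℕ | T i ≠ ∅}.Finite) :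
    (∃ T : ℕ → Set P, THT.EqModel φ T) ↔
      ∃ T : ℕ → Set P,
        THT.ltlSat
          (THT.and φ (THT.ev (THT.alw (conjNeg (Finset.univ : Finset P).toList)))) T 0 := by
  constructor
  · rintro ⟨T, hT⟩
    refine ⟨T, (THT.sat_total φ T 0).mp hT.1, (ltlSat_FG_empty T).mpr ?_⟩
    have hfin := hae T hT
    obtain ⟨m, hm⟩ := hfin.bddAbove
    refine ⟨m + 1, fun k hk => ?_⟩
    by_contra h
    have : k ≤ m := hm h
    omega
  · rintro ⟨T, hφT, hFG⟩
    obtain ⟨m, hm⟩ := (ltlSat_FG_empty T).mp hFG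
    -- the set of LTL models below T, measured by total size on [0, m)
    set S : (ℕ → Set P) → Prop :=
      fun H => (∀ i, H i ⊆ T i) ∧ THT.ltlSat φ H 0 with hS
    set n : (ℕ → Set P) → ℕ :=
      fun H => ∑ i ∈ Finset.range m, (H i).ncard with hn
    have hTS : S T := ⟨fun i => subset_rfl, hφT⟩
    set A : Set ℕ := {k | ∃ H, S H ∧ n H = k} with hA
    have hAne : A.Nonempty := ⟨n T, T, hTS, rfl⟩
    obtain ⟨H0, hH0S, hH0n⟩ := Nat.sInf_mem hAne
    have hmin : ∀ H, S H → sInf A ≤ n H := fun H h => Nat.sInf_le ⟨H, h, rfl⟩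
    refine ⟨H0, (THT.sat_total φ H0 0).mpr hH0S.2, ?_⟩
    intro H' hsub hne hsat
    have hl : THT.ltlSat φ H' 0 := THT.sat_to_ltl φ hφ H' H0 0 hsat
    have hsub' : ∀ i, H' i ⊆ T i := fun i => (hsub i).trans (hH0S.1 i)
    have hS' : S H' := ⟨hsub', hl⟩
    -- find an index where they differ; it must be < m
    have hdiff : ∃ i, H' i ≠ H0 i := by
      by_contra h
      push_neg at h
      exact hne (funext h)
    obtain ⟨i0, hi0⟩ := hdiff
    have hempty : ∀ i, m ≤ i → H0 i = ∅ ∧ H' i = ∅ := by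
      intro i hi
      have h1 : H0 i ⊆ ∅ := hm i hi ▸ hH0S.1 i
      have h2 : H' i ⊆ ∅ := hm i hi ▸ hsub' i
      exact ⟨Set.subset_empty_iff.mp h1, Set.subset_empty_iff.mp h2⟩
    have hi0m : i0 < m := by
      by_contra h
      push_neg at h
      obtain ⟨e1, e2⟩ := hempty i0 h
      exact hi0 (e2.trans e1.symm)
    have hlt : n H' < n H0 := by
      refine Finset.sum_lt_sum (fun i _ => Set.ncard_le_ncard (hsub i) (Set.toFinite _))
        ⟨i0, Finset.mem_range.mpr hi0m, ?_⟩
      exact Set.ncard_lt_ncard ⟨hsub i0, fun h => hi0 (Set.Subset.antisymm (hsub i0) h)⟩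
        (Set.toFinite _)
    have := hmin H' hS'
    omega
end

section
/- Stretching empty gaps preserves equilibrium models for THT(X,F): let φ use only temporal modalities X and F, let (T,T) be an almost-empty equilibrium model of φ of size ℓ, and suppose [h,k] is an interval of empty positions of T with k ≤ ℓ and k − h > d_X(φ)+1. Then the total interpretation (T',T') obtained by deleting one position of this interval (T'(i) = T(i) for i < k and T'(i) = T(i+1) for i ≥ k) is still an equilibrium model of φ, is almost-empty of size ℓ−1, and has the same number of non-empty positions. -/
/-- `AESize T ℓ`: the almost-empty total interpretation `T` has size `ℓ`, i.e.
`ℓ = h₀ + 1` where `h₀` is the least position from which on `T` is empty. -/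
def AESize {P : Type} (T : ℕ → Set P) (ℓ : ℕ) : Prop :=
  ∃ h0 : ℕ, ℓ = h0 + 1 ∧ (∀ i, h0 ≤ i → T i = ∅) ∧
    ∀ h' < h0, ∃ i, h' ≤ i ∧ T i ≠ ∅

namespace THT

variable {P : Type}

lemma sat_top' (H T : ℕ → Set P) (i : ℕ) : sat (top : THT P) H T i :=
  ⟨fun h => h, fun h => h⟩

/-- Satisfaction is invariant under a pointwise suffix shift. -/
lemma satShift (ψ : THT P) (i : ℕ) (H₁ T₁ H₂ T₂ : ℕ → Set P)
    (hH : ∀ n, i ≤ n → H₁ n = H₂ (n + 1)) (hT : ∀ n, i ≤ n → T₁ n = T₂ (n + 1)) :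
    sat ψ H₁ T₁ i ↔ sat ψ H₂ T₂ (i + 1) := by
  induction ψ generalizing i H₁ T₁ H₂ T₂ with
  | atom p => simp only [sat]; rw [hH i le_rfl]
  | falsum => exact Iff.rfl
  | or a b iha ihb =>
      exact or_congr (iha i _ _ _ _ hH hT) (ihb i _ _ _ _ hH hT)
  | and a b iha ihb =>
      exact and_congr (iha i _ _ _ _ hH hT) (ihb i _ _ _ _ hH hT)
  | imp a b iha ihb =>
      exact and_congr (imp_congr (iha i _ _ _ _ hH hT) (ihb i _ _ _ _ hH hT))
        (imp_congr (iha i T₁ T₁ T₂ T₂ hT hT) (ihb i T₁ T₁ T₂ T₂ hT hT))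
  | next a iha =>
      exact iha (i + 1) _ _ _ _ (fun n hn => hH n (by omega)) (fun n hn => hT n (by omega))
  | until_ a b iha ihb =>
      simp only [sat]
      constructor
      · rintro ⟨j, hij, hb, ha⟩
        refine ⟨j + 1, by omega,
          (ihb j _ _ _ _ (fun n hn => hH n (by omega)) (fun n hn => hT n (by omega))).mp hb, ?_⟩
        intro m h1 h2
        have h3 := (iha (m - 1) _ _ _ _ (fun n hn => hH n (by omega))
          (fun n hn => hT n (by omega))).mp (ha (m - 1) (by omega) (by omega))
        rwa [show m - 1 + 1 = m by omega] at h3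
      · rintro ⟨j, hij, hb, ha⟩
        refine ⟨j - 1, by omega, ?_, ?_⟩
        · have h3 := ihb (j - 1) H₁ T₁ H₂ T₂ (fun n hn => hH n (by omega))
            (fun n hn => hT n (by omega))
          rw [show j - 1 + 1 = j by omega] at h3
          exact h3.mpr hb
        · intro m h1 h2
          exact (iha m _ _ _ _ (fun n hn => hH n (by omega)) (fun n hn => hT n (by omega))).mpr
            (ha (m + 1) (by omega) (by omega))
  | release a b iha ihb =>
      simp only [sat]
      constructor
      · intro hr j hj
        rcases hr (j - 1) (by omega) with hb | ⟨m, h1, h2, ha⟩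
        · left
          have h3 := ihb (j - 1) H₁ T₁ H₂ T₂ (fun n hn => hH n (by omega))
            (fun n hn => hT n (by omega))
          rw [show j - 1 + 1 = j by omega] at h3
          exact h3.mp hb
        · right
          exact ⟨m + 1, by omega, by omega,
            (iha m _ _ _ _ (fun n hn => hH n (by omega)) (fun n hn => hT n (by omega))).mp ha⟩
      · intro hr j hj
        rcases hr (j + 1) (by omega) with hb | ⟨m, h1, h2, ha⟩
        · left
          exact (ihb j _ _ _ _ (fun n hn => hH n (by omega)) (fun n hn => hT n (by omega))).mpr hb
        · right
          refine ⟨m - 1, by omega, by omega, ?_⟩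
          have h3 := iha (m - 1) H₁ T₁ H₂ T₂ (fun n hn => hH n (by omega))
            (fun n hn => hT n (by omega))
          rw [show m - 1 + 1 = m by omega] at h3
          exact h3.mpr ha

/-- Deleting one empty position from a long enough empty gap preserves satisfaction of
XF formulas at positions whose X-window ends before the gap end. -/
lemma satDel (T : ℕ → Set P) (h k : ℕ)
    (hTe : ∀ n, h ≤ n → n ≤ k → T n = ∅) :
    ∀ (ψ : THT P), IsXF ψ → dX ψ + 2 ≤ k - h →
    ∀ (H : ℕ → Set P), (∀ n, h ≤ n → n ≤ k → H n = ∅) →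
    ∀ i, i + dX ψ < k →
    (sat ψ (fun n => if n < k then H n else H (n + 1))
        (fun n => if n < k then T n else T (n + 1)) i ↔ sat ψ H T i) := by
  have shiftHyp : ∀ (A : ℕ → Set P), (∀ n, h ≤ n → n ≤ k → A n = ∅) →
      ∀ j, h ≤ j → ∀ n, j ≤ n →
      (fun n => if n < k then A n else A (n + 1)) n = A (n + 1) := by
    intro A hA j hj n hn
    by_cases hnk : n < k
    · simp only [if_pos hnk]
      rw [hA n (by omega) (by omega), hA (n + 1) (by omega) (by omega)]
    · simp only [if_neg hnk]
  have G : ∀ (χ : THT P) (A : ℕ → Set P), (∀ n, h ≤ n → n ≤ k → A n = ∅) →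
      ∀ j, h ≤ j →
      (sat χ (fun n => if n < k then A n else A (n + 1))
        (fun n => if n < k then T n else T (n + 1)) j ↔ sat χ A T (j + 1)) :=
    fun χ A hA j hj =>
      satShift χ j _ _ _ _ (shiftHyp A hA j hj) (shiftHyp T hTe j hj)
  intro ψ hψ
  induction hψ with
  | atom p =>
      intro _ H _ i hik
      simp only [dX] at hik
      simp only [sat]
      rw [if_pos (show i < k by omega)]
  | falsum =>
      intro _ H _ i _
      exact Iff.rfl
  | @or a b ha hb iha ihb =>
      intro hg H hHe i hik
      simp only [dX] at hg hik
      exact or_congr (iha (by omega) H hHe i (by omega)) (ihb (by omega) H hHe i (by omega))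
  | @and a b ha hb iha ihb =>
      intro hg H hHe i hik
      simp only [dX] at hg hik
      exact and_congr (iha (by omega) H hHe i (by omega)) (ihb (by omega) H hHe i (by omega))
  | @imp a b ha hb iha ihb =>
      intro hg H hHe i hik
      simp only [dX] at hg hik
      exact and_congr
        (imp_congr (iha (by omega) H hHe i (by omega)) (ihb (by omega) H hHe i (by omega)))
        (imp_congr (iha (by omega) T hTe i (by omega)) (ihb (by omega) T hTe i (by omega)))
  | @next a ha iha =>
      intro hg H hHe i hik
      simp only [dX] at hg hik
      exact iha (by omega) H hHe (i + 1) (by omega)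
  | @fut a ha iha =>
      intro hg H hHe i hik
      have hd : dX (ev a) = dX a := by simp [ev, top, neg, dX]
      rw [hd] at hg hik
      show sat (until_ top a) _ _ i ↔ sat (until_ top a) H T i
      simp only [sat]
      constructor
      · rintro ⟨j, hij, hbj, -⟩
        by_cases hjk : j + dX a < k
        · exact ⟨j, hij, (iha hg H hHe j hjk).mp hbj, fun m _ _ => sat_top' H T m⟩
        · exact ⟨j + 1, by omega, (G a H hHe j (by omega)).mp hbj,
            fun m _ _ => sat_top' H T m⟩
      · rintro ⟨j, hij, hbj, -⟩
        by_cases hjk : j + dX a < k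
        · exact ⟨j, hij, (iha hg H hHe j hjk).mpr hbj, fun m _ _ =>
            sat_top' (fun n => if n < k then H n else H (n + 1))
              (fun n => if n < k then T n else T (n + 1)) m⟩
        · refine ⟨j - 1, by omega, ?_, fun m _ _ =>
            sat_top' (fun n => if n < k then H n else H (n + 1))
              (fun n => if n < k then T n else T (n + 1)) m⟩
          have h3 := G a H hHe (j - 1) (by omega)
          rw [show j - 1 + 1 = j by omega] at h3
          exact h3.mpr hbj

end THT

/-- Stretching empty gaps preserves equilibrium models for THT(X,F): deleting one
position from a long enough interval of empty positions of an almost-empty equilibrium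
model yields an almost-empty equilibrium model of size one less, with the same number
of non-empty positions. -/
theorem eqModel_XF_contract_empty_gap {P : Type} (φ : THT P) (hφ : THT.IsXF φ)
    (T : ℕ → Set P) (ℓ h k : ℕ)
    (heq : THT.EqModel φ T) (hsz : AESize T ℓ)
    (hempty : ∀ i, h ≤ i → i ≤ k → T i = ∅)
    (hk : k ≤ ℓ) (hgap : THT.dX φ + 1 < k - h) :
    THT.EqModel φ (fun i => if i < k then T i else T (i + 1)) ∧
    AESize (fun i => if i < k then T i else T (i + 1)) (ℓ - 1) ∧
    {i : ℕ | (if i < k then T i else T (i + 1)) ≠ ∅}.ncard = {i : ℕ | T i ≠ ∅}.ncard := by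
  obtain ⟨hsat0, hmin⟩ := heq
  have hgap2 : THT.dX φ + 2 ≤ k - h := by omega
  have hk2 : h + 2 ≤ k := by omega
  obtain ⟨h0, hl, hh0e, hh0ne⟩ := hsz
  have hkl : k ≤ h0 + 1 := by omega
  have hdel := THT.satDel T h k hempty φ hφ hgap2
  refine ⟨⟨?_, ?_⟩, ⟨h0 - 1, by omega, ?_, ?_⟩, ?_⟩
  · -- (T',T') ⊨ φ
    exact (hdel T hempty 0 (by omega)).mpr hsat0
  · -- minimality
    intro H' hsub hne hsat'
    set H : ℕ → Set P := fun i => if i < k then H' i else if i = k then (∅ : Set P) else H' (i - 1)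
      with hHdef
    have hdelH : (fun n => if n < k then H n else H (n + 1)) = H' := by
      funext n
      by_cases hnk : n < k
      · simp [H, hnk]
      · have h1 : ¬ (n + 1 < k) := by omega
        have h2 : ¬ (n + 1 = k) := by omega
        simp [H, hnk, h1, h2]
    have hHe : ∀ n, h ≤ n → n ≤ k → H n = ∅ := by
      intro n h1 h2
      by_cases hnk : n < k
      · have hs : H' n ⊆ (if n < k then T n else T (n + 1)) := hsub n
        rw [if_pos hnk, hempty n h1 (by omega)] at hs
        have : H' n = ∅ := Set.subset_empty_iff.mp hs
        simp [H, hnk, this]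
      · have hnke : n = k := by omega
        simp [H, hnke]
    have hsubHT : ∀ i, H i ⊆ T i := by
      intro i
      by_cases hik : i < k
      · have hs : H' i ⊆ (if i < k then T i else T (i + 1)) := hsub i
        rw [if_pos hik] at hs
        simpa [H, hik] using hs
      · by_cases hik2 : i = k
        · simp [H, hik2]
        · have hs : H' (i - 1) ⊆ (if i - 1 < k then T (i - 1) else T (i - 1 + 1)) := hsub (i - 1)
          rw [if_neg (show ¬ i - 1 < k by omega), show i - 1 + 1 = i by omega] at hs
          simpa [H, hik, hik2] using hs
    have hHneT : H ≠ T := by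
      intro hcontra
      apply hne
      rw [← hdelH, hcontra]
    exact hmin H hsubHT hHneT ((hdel H hHe 0 (by omega)).mp (by rw [hdelH]; exact hsat'))
  · -- T' is empty from h0 - 1 on
    intro i hi
    by_cases hik : i < k
    · show (if i < k then T i else T (i + 1)) = ∅
      rw [if_pos hik]
      exact hempty i (by omega) (by omega)
    · show (if i < k then T i else T (i + 1)) = ∅
      rw [if_neg hik]
      exact hh0e (i + 1) (by omega)
  · -- below h0 - 1 there are nonempty positions of T'
    intro h' hh'
    obtain ⟨j, hj1, hj2⟩ := hh0ne (h' + 1) (by omega)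
    have hjk : j ≠ k := fun hc => hj2 (hc ▸ hempty k (by omega) le_rfl)
    by_cases hjlt : j < k
    · refine ⟨j, by omega, ?_⟩
      show (if j < k then T j else T (j + 1)) ≠ ∅
      rw [if_pos hjlt]
      exact hj2
    · refine ⟨j - 1, by omega, ?_⟩
      show (if j - 1 < k then T (j - 1) else T (j - 1 + 1)) ≠ ∅
      rw [if_neg (show ¬ j - 1 < k by omega), show j - 1 + 1 = j by omega]
      exact hj2
  · -- equal number of nonempty positions
    have hinj : Function.Injective (fun i => if i < k then i else i + 1) := by
      intro a b hab
      simp only at hab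
      split_ifs at hab <;> omega
    have himg : (fun i => if i < k then i else i + 1) ''
        {i : ℕ | (if i < k then T i else T (i + 1)) ≠ ∅} = {i : ℕ | T i ≠ ∅} := by
      ext j
      constructor
      · rintro ⟨i, hi, rfl⟩
        simp only [Set.mem_setOf_eq] at hi ⊢
        by_cases hik : i < k
        · rw [if_pos hik] at hi ⊢
          exact hi
        · rw [if_neg hik] at hi ⊢
          exact hi
      · intro hj
        simp only [Set.mem_setOf_eq] at hj
        have hjk : j ≠ k := fun hc => hj (hc ▸ hempty k (by omega) le_rfl)
        by_cases hjlt : j < k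
        · refine ⟨j, ?_, by simp [hjlt]⟩
          simp only [Set.mem_setOf_eq, if_pos hjlt]
          exact hj
        · refine ⟨j - 1, ?_, ?_⟩
          · simp only [Set.mem_setOf_eq, if_neg (show ¬ j - 1 < k by omega)]
            rwa [show j - 1 + 1 = j by omega]
          · simp only [if_neg (show ¬ j - 1 < k by omega)]
            omega
    rw [← himg, Set.ncard_image_of_injective _ hinj]
end
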